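/- For λ ∈ {XY, XZ, YZ}, α ∈ ℝ and c ∈ {0,1}, let E_{λ,α,c} : ℂ² ⊗ ℂ² → ℂ be the symmetric green-fusion success effect E_{λ,α,c} = ⟨+_{λ,α}| ∘ M ∘ (S^c ⊗ S^c), where M = |0⟩⟨00| + |1⟩⟨11| and S = diag(1, i). Suppose α is an integer multiple of π/2 (the stabilizer case). Then either E_{λ,α,c} is a product effect (proportional to ⟨x| ⊗ ⟨y| for single-qubit effects ⟨x|, ⟨y|; the trivial Z-fusion case), or there exist a complex number z with |z| = 1 and a bit b ∈ {0,1} such that E_{λ,α,c} = z · (1/√2)(⟨00| + ⟨11|) ∘ (I ⊗ Z^b) (an X-fusion up to Pauli) or E_{λ,α,c} = z · (1/√2)(⟨00| + i⟨11|) ∘ (I ⊗ Z^b) (a Y-fusion up to Pauli). In words: up to local Paulis on the target qubits, every entangling stabilizer fusion with green failure is either an X-fusion or a Y-fusion. -/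

import Mathlib

open Complex

/-- The three measurement planes. -/
inductive Plane | XY | XZ | YZ

/-- The plane-measurement effects on `ℂ²`, as functionals on basis states:
`⟨+_{XY,α}| = (1/√2)(⟨0| + e^{iα}⟨1|)`,
`⟨+_{YZ,α}| = (1/√2)(⟨+| + e^{iα}⟨−|)`, and
`⟨+_{XZ,α}| = (1/√2)(⟨i| + e^{iα}⟨−i|)` with `|±i⟩ = (|0⟩ ± i|1⟩)/√2`. -/
noncomputable def planeEffect (pl : Plane) (α : ℝ) (c : Fin 2) : ℂ :=
  match pl with
  | Plane.XY => ((Real.sqrt 2 : ℂ))⁻¹ * (if c = 0 then 1 else Complex.exp (α * Complex.I))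
  | Plane.YZ => (1 / 2 : ℂ) * (1 + (-1 : ℂ) ^ (c : ℕ) * Complex.exp (α * Complex.I))
  | Plane.XZ => (1 / 2 : ℂ) *
      ((-Complex.I) ^ (c : ℕ) + Complex.I ^ (c : ℕ) * Complex.exp (α * Complex.I))

/-- The symmetric green-fusion success effect
`E_{λ,α,c} = ⟨+_{λ,α}| ∘ M ∘ (S^c ⊗ S^c)` on `ℂ² ⊗ ℂ²`, where
`M = |0⟩⟨00| + |1⟩⟨11|` is the spider-merge map and `S = diag(1, i)`;
`E_{λ,α,c}(|a⟩⊗|b⟩) = i^{ca}·i^{cb}·[a = b]·⟨+_{λ,α}|a⟩`. -/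
noncomputable def greenFusionEffect (pl : Plane) (α : ℝ) (c : Fin 2) (a b : Fin 2) : ℂ :=
  (if a = b then planeEffect pl α a else 0) *
    Complex.I ^ ((c : ℕ) * (a : ℕ)) * Complex.I ^ ((c : ℕ) * (b : ℕ))


/-!
The success effect is diagonal, `E(a, b) = [a = b] f a` with `f a = ±⟨+_{λ,α}|a⟩`, the sign being
`(-1)^{ca}` from `S^c ⊗ S^c`. For `α ∈ (π/2)ℤ`, `u = e^{iα}` is a fourth root of unity, so a power
of `i`. In the XY plane `f 1 / f 0 = ±u`. In the XZ and YZ planes either `u = ±1`, and then one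
diagonal entry vanishes (a product effect), or `u = ±i`, and then `|f 0| = 1/√2` and
`f 1 / f 0` is again a power of `i`. A diagonal effect with `|f 0| = 1/√2` and `f 1 = i^n f 0` is,
up to the phase `√2 f 0`, the X-fusion effect (`n` even) or the Y-fusion effect (`n` odd),
followed by `Z^b` with `b = ⌊n/2⌋ mod 2`.
-/

theorem exists_I_pow_eq_neg_one_pow_or_eq_I_mul (n : ℕ) :
    ∃ bb : Fin 2, I ^ n = (-1) ^ (bb : ℕ) ∨ I ^ n = I * (-1) ^ (bb : ℕ) := by
  rw [I_pow_eq_pow_mod]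
  have : n % 4 < 4 := Nat.mod_lt _ (by norm_num)
  interval_cases n % 4
  · exact ⟨0, Or.inl (by simp)⟩
  · exact ⟨0, Or.inr (by simp)⟩
  · exact ⟨1, Or.inl (by simp)⟩
  · exact ⟨1, Or.inr (by simp [I_pow_three])⟩

theorem exists_exp_mul_I_eq_I_pow {α : ℝ} (hα : ∃ k : ℤ, α = k * (Real.pi / 2)) :
    ∃ n : ℕ, exp (α * I) = I ^ n := by
  obtain ⟨k, rfl⟩ := hα
  have h4 : exp ((k * (Real.pi / 2) : ℝ) * I) ^ 4 = 1 := by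
    rw [← exp_nat_mul]
    convert exp_int_mul_two_pi_mul_I k using 2
    push_cast
    ring
  obtain ⟨n, -, hn⟩ := isPrimitiveRoot_I.eq_pow_of_pow_eq_one h4
  exact ⟨n, hn.symm⟩

theorem norm_one_add_div_two_of_sq_eq_neg_one {u : ℂ} (hu : u ^ 2 = -1) :
    ‖(1 + u) / 2‖ = (√2)⁻¹ := by
  obtain rfl | rfl : u = I ∨ u = -I := by
    have hroots : (u - I) * (u + I) = 0 := by linear_combination hu - I_sq
    rcases mul_eq_zero.1 hroots with h | h
    · exact Or.inl (sub_eq_zero.1 h)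
    · exact Or.inr (eq_neg_of_add_eq_zero_left h)
  · rw [norm_div, show (1 : ℂ) + I = (1 : ℝ) + (1 : ℝ) * I by simp, norm_add_mul_I]
    norm_num [Real.sqrt_div_self]
  · rw [norm_div, show (1 : ℂ) + -I = (1 : ℝ) + (-1 : ℝ) * I by simp, norm_add_mul_I]
    norm_num [Real.sqrt_div_self]

theorem norm_sqrt_two_mul_eq_one {w : ℂ} (hw : ‖w‖ = (√2)⁻¹) : ‖(√2 : ℂ) * w‖ = 1 := by
  rw [norm_mul, hw, Complex.norm_real, Real.norm_of_nonneg (Real.sqrt_nonneg 2),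
    mul_inv_cancel₀ (by positivity)]

theorem diagonal_eq_product_of_mul_eq_zero (f : Fin 2 → ℂ) (h : f 0 * f 1 = 0) :
    ∃ x y : Fin 2 → ℂ, ∀ a b : Fin 2, (if a = b then f a else 0) = x a * y b := by
  rcases mul_eq_zero.1 h with h0 | h1
  · exact ⟨f, Pi.single 1 1, fun a b => by fin_cases a <;> fin_cases b <;> simp [h0]⟩
  · exact ⟨f, Pi.single 0 1, fun a b => by fin_cases a <;> fin_cases b <;> simp [h1]⟩

theorem diagonal_eq_xFusion_or_yFusion (f : Fin 2 → ℂ) (hnorm : ‖f 0‖ = (√2)⁻¹) {n : ℕ}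
    (hn : f 1 = I ^ n * f 0) :
    (∃ z : ℂ, ‖z‖ = 1 ∧ ∃ bb : Fin 2, ∀ a b : Fin 2,
      (if a = b then f a else 0) =
        z * ((√2 : ℂ)⁻¹ * (if a = b then (-1 : ℂ) ^ ((bb : ℕ) * (b : ℕ)) else 0))) ∨
    (∃ z : ℂ, ‖z‖ = 1 ∧ ∃ bb : Fin 2, ∀ a b : Fin 2,
      (if a = b then f a else 0) =
        z * ((√2 : ℂ)⁻¹ * (if a = b then I ^ (a : ℕ) * (-1 : ℂ) ^ ((bb : ℕ) * (b : ℕ)) else 0))) := by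
  have hsqrt : (√2 : ℂ) ≠ 0 := by exact_mod_cast (by positivity : √2 ≠ 0)
  obtain ⟨bb, hX | hY⟩ := exists_I_pow_eq_neg_one_pow_or_eq_I_mul n
  · refine Or.inl ⟨√2 * f 0, norm_sqrt_two_mul_eq_one hnorm, bb, fun a b => ?_⟩
    fin_cases a <;> fin_cases b <;> simp [hn, hX] <;> field_simp
  · refine Or.inr ⟨√2 * f 0, norm_sqrt_two_mul_eq_one hnorm, bb, fun a b => ?_⟩
    fin_cases a <;> fin_cases b <;> simp [hn, hY] <;> field_simp

def IsStabilizerDiagonal (f₀ f₁ : ℂ) : Prop :=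
  f₀ * f₁ = 0 ∨ (‖f₀‖ = (√2)⁻¹ ∧ ∃ n : ℕ, f₁ = I ^ n * f₀)

theorem IsStabilizerDiagonal.mul_I_pow {f₀ f₁ : ℂ} (h : IsStabilizerDiagonal f₀ f₁) (k : ℕ) :
    IsStabilizerDiagonal f₀ (f₁ * I ^ k) := by
  rcases h with h | ⟨hnorm, n, rfl⟩
  · left
    rw [← mul_assoc, h, zero_mul]
  · exact Or.inr ⟨hnorm, n + k, by ring⟩

theorem isStabilizerDiagonal_planeEffect (pl : Plane) {α : ℝ} {n : ℕ}
    (hn : exp (α * I) = I ^ n) :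
    IsStabilizerDiagonal (planeEffect pl α 0) (planeEffect pl α 1) := by
  have hu : exp (α * I) ^ 2 = (-1) ^ n := by rw [hn, ← pow_mul, mul_comm, pow_mul, I_sq]
  cases pl
  case XY =>
    refine Or.inr ⟨by simp [planeEffect], n, ?_⟩
    simp only [planeEffect, Fin.isValue, one_ne_zero, if_false, if_true, hn]
    ring
  case XZ =>
    rcases n.even_or_odd with he | ho
    · left
      simp only [planeEffect, Fin.val_zero, Fin.val_one, pow_zero, pow_one]
      linear_combination (I / 4) * (hu.trans he.neg_one_pow)
    · have hsq := hu.trans ho.neg_one_pow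
      refine Or.inr ⟨?_, n + 1, ?_⟩
      · convert norm_one_add_div_two_of_sq_eq_neg_one hsq using 2
        simp only [planeEffect, Fin.val_zero, pow_zero]
        ring
      · simp only [planeEffect, Fin.val_zero, Fin.val_one, pow_zero, pow_one, pow_add, ← hn]
        linear_combination (-I / 2) * hsq
  case YZ =>
    rcases n.even_or_odd with he | ho
    · left
      simp only [planeEffect, Fin.val_zero, Fin.val_one, pow_zero, pow_one]
      linear_combination (-1 / 4) * (hu.trans he.neg_one_pow)
    · have hsq := hu.trans ho.neg_one_pow
      refine Or.inr ⟨?_, n + 2, ?_⟩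
      · convert norm_one_add_div_two_of_sq_eq_neg_one hsq using 2
        simp only [planeEffect, Fin.val_zero, pow_zero]
        ring
      · simp only [planeEffect, Fin.val_zero, Fin.val_one, pow_zero, pow_one, pow_add, ← hn,
          I_sq]
        linear_combination (1 / 2) * hsq

theorem greenFusionEffect_eq_ite (pl : Plane) (α : ℝ) (c a b : Fin 2) :
    greenFusionEffect pl α c a b =
      if a = b then planeEffect pl α a * I ^ (2 * ((c : ℕ) * a)) else 0 := by
  unfold greenFusionEffect
  split_ifs with h
  · subst h
    ring
  · simp

/-- In the stabilizer case (`α` an integer multiple of `π/2`), every symmetric green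
fusion effect `E_{λ,α,c}` is either a product effect (the trivial Z-fusion case), or, up
to a unit scalar `z` and a Pauli `Z^b` on the second qubit, equal to the X-fusion effect
`(1/√2)(⟨00| + ⟨11|)` or to the Y-fusion effect `(1/√2)(⟨00| + i⟨11|)`:
up to local Paulis, every entangling stabilizer fusion with green failure is an X-fusion
or a Y-fusion. -/
theorem stabilizer_green_fusion_is_X_or_Y
    (pl : Plane) (α : ℝ) (c : Fin 2) (hα : ∃ kk : ℤ, α = kk * (Real.pi / 2)) :
    (∃ x y : Fin 2 → ℂ, ∀ a b : Fin 2, greenFusionEffect pl α c a b = x a * y b) ∨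
    (∃ z : ℂ, ‖z‖ = 1 ∧ ∃ bb : Fin 2, ∀ a b : Fin 2,
      greenFusionEffect pl α c a b =
        z * (((Real.sqrt 2 : ℂ))⁻¹ *
          (if a = b then (-1 : ℂ) ^ ((bb : ℕ) * (b : ℕ)) else 0))) ∨
    (∃ z : ℂ, ‖z‖ = 1 ∧ ∃ bb : Fin 2, ∀ a b : Fin 2,
      greenFusionEffect pl α c a b =
        z * (((Real.sqrt 2 : ℂ))⁻¹ *
          (if a = b then Complex.I ^ (a : ℕ) * (-1 : ℂ) ^ ((bb : ℕ) * (b : ℕ)) else 0))) := by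
  obtain ⟨n, hn⟩ := exists_exp_mul_I_eq_I_pow hα
  set f : Fin 2 → ℂ := fun a => planeEffect pl α a * I ^ (2 * ((c : ℕ) * a))
  have hf : IsStabilizerDiagonal (f 0) (f 1) := by
    simpa [f] using (isStabilizerDiagonal_planeEffect pl hn).mul_I_pow (2 * c)
  simp only [greenFusionEffect_eq_ite]
  rcases hf with hprod | ⟨hnorm, m, hm⟩
  · exact Or.inl (diagonal_eq_product_of_mul_eq_zero f hprod)
  · exact Or.inr (diagonal_eq_xFusion_or_yFusion f hnorm hm)
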